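/- arXiv:1809.05316 — 2 statements merged into one kernel-verified Lean document; each statement's English description precedes it below -/
import Mathlib

section
/- For s ∈ (0,1) let F_s(x) = ∫_s^x du/(u²√(u²−s²)) for x ∈ [s,1]. Then sup over a ∈ L^∞([0,1]) with ∫₀¹ a = 1 of inf_{s∈(0,1)} (1/F_s(1)) ∫_s^1 a(u)/(u²√(u²−s²)) du equals 1, and the supremum is attained at a ≡ 1. -/
/-!
Write `w_s(u) = 1 / (u² √(u² - s²))`, so that `F_s(1) = ∫_s^1 w_s`. For `a ≡ 1` every normalized
functional equals `1`. For a general `a` with `∫₀¹ a = 1`, put `h = a - 1`; by Fubini,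
`∫₀¹ s² ∫_s^1 h w_s du ds = ∫₀¹ h(u) u⁻² (∫₀^u s² / √(u² - s²) ds) du = (π/4) ∫₀¹ h = 0`,
so `∫_s^1 h w_s ≤ 0` for some `s ∈ (0,1)`, i.e. the functional at that `s` is at most `1`.
-/

open MeasureTheory Real Set

lemma intervalIntegrable_deriv_and_integral_eq_sub_of_nonneg {g g' : ℝ → ℝ} {a b : ℝ}
    (hab : a ≤ b) (hcont : ContinuousOn g (Icc a b))
    (hderiv : ∀ x ∈ Ioo a b, HasDerivAt g (g' x) x) (hpos : ∀ x ∈ Ioo a b, 0 ≤ g' x) :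
    IntervalIntegrable g' volume a b ∧ ∫ x in a..b, g' x = g b - g a := by
  have hint : IntervalIntegrable g' volume a b := by
    rw [intervalIntegrable_iff_integrableOn_Ioc_of_le hab]
    exact intervalIntegral.integrableOn_deriv_of_nonneg hcont hderiv hpos
  exact ⟨hint, intervalIntegral.integral_eq_sub_of_hasDerivAt_of_le hab hcont hderiv hint⟩

lemma hasDerivAt_sqrt_sq_sub_sq_div {s u : ℝ} (hs : s ≠ 0) (hsu : s ^ 2 < u ^ 2) :
    HasDerivAt (fun x => √(x ^ 2 - s ^ 2) / (s ^ 2 * x)) (1 / (u ^ 2 * √(u ^ 2 - s ^ 2))) u := by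
  have hpos : 0 < u ^ 2 - s ^ 2 := by linarith
  have hu : u ≠ 0 := by rintro rfl; nlinarith [sq_nonneg s]
  have hsqrt := ((hasDerivAt_pow 2 u).sub_const (s ^ 2)).sqrt hpos.ne'
  refine (hsqrt.div ((hasDerivAt_id u).const_mul (s ^ 2)) (by positivity)).congr_deriv ?_
  have e : √(u ^ 2 - s ^ 2) ^ 2 = u ^ 2 - s ^ 2 := sq_sqrt hpos.le
  simp only [id, Nat.cast_ofNat, Nat.add_one_sub_one, pow_one]
  field_simp
  rw [e]
  ring

lemma hasDerivAt_arcsin_sub_mul_sqrt {s u : ℝ} (hu : 0 < u) (hs : s ∈ Ioo (-u) u) :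
    HasDerivAt (fun x => u ^ 2 / 2 * arcsin (x / u) - x / 2 * √(u ^ 2 - x ^ 2))
      (s ^ 2 / √(u ^ 2 - s ^ 2)) s := by
  have hpos : 0 < u ^ 2 - s ^ 2 := by nlinarith [hs.1, hs.2]
  have hsu : s / u ∈ Ioo (-1) 1 := by
    constructor
    · rw [lt_div_iff₀ hu]; linarith [hs.1]
    · rw [div_lt_one hu]; exact hs.2
  have harcsin := (hasDerivAt_arcsin hsu.1.ne' hsu.2.ne).comp s ((hasDerivAt_id s).div_const u)
  have hsqrt := ((hasDerivAt_pow 2 s).const_sub (u ^ 2)).sqrt hpos.ne'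
  refine ((harcsin.const_mul (u ^ 2 / 2)).sub
    (((hasDerivAt_id s).div_const 2).mul hsqrt)).congr_deriv ?_
  have e1 : √(1 - (s / u) ^ 2) = √(u ^ 2 - s ^ 2) / u := by
    rw [show 1 - (s / u) ^ 2 = (u ^ 2 - s ^ 2) / u ^ 2 by field_simp, sqrt_div hpos.le,
      sqrt_sq hu.le]
  have e2 : √(u ^ 2 - s ^ 2) ^ 2 = u ^ 2 - s ^ 2 := sq_sqrt hpos.le
  rw [e1]
  field_simp
  simp only [id, Nat.cast_ofNat]
  linear_combination (-2) * e2

lemma intervalIntegrable_and_integral_one_div_sq_mul_sqrt_sq_sub_sq {s b : ℝ} (hs : 0 < s)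
    (hsb : s ≤ b) :
    IntervalIntegrable (fun u => 1 / (u ^ 2 * √(u ^ 2 - s ^ 2))) volume s b ∧
      ∫ u in s..b, 1 / (u ^ 2 * √(u ^ 2 - s ^ 2)) = √(b ^ 2 - s ^ 2) / (s ^ 2 * b) := by
  have hcont : ContinuousOn (fun x => √(x ^ 2 - s ^ 2) / (s ^ 2 * x)) (Icc s b) :=
    ContinuousOn.div (by fun_prop) (by fun_prop) fun x hx => by
      have : 0 < x := hs.trans_le hx.1
      positivity
  obtain ⟨hint, hval⟩ := intervalIntegrable_deriv_and_integral_eq_sub_of_nonneg hsb hcont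
    (fun u hu => hasDerivAt_sqrt_sq_sub_sq_div hs.ne' (by nlinarith [hu.1]))
    (fun u _ => by positivity)
  exact ⟨hint, by simpa using hval⟩

lemma intervalIntegrable_and_integral_sq_div_sqrt_sq_sub_sq {u : ℝ} (hu : 0 < u) :
    IntervalIntegrable (fun s => s ^ 2 / √(u ^ 2 - s ^ 2)) volume 0 u ∧
      ∫ s in (0 : ℝ)..u, s ^ 2 / √(u ^ 2 - s ^ 2) = π / 4 * u ^ 2 := by
  obtain ⟨hint, hval⟩ := intervalIntegrable_deriv_and_integral_eq_sub_of_nonneg hu.le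
    (g := fun x => u ^ 2 / 2 * arcsin (x / u) - x / 2 * √(u ^ 2 - x ^ 2)) (by fun_prop)
    (fun s hs => hasDerivAt_arcsin_sub_mul_sqrt hu ⟨by linarith [hs.1], hs.2⟩)
    (fun s _ => by positivity)
  refine ⟨hint, ?_⟩
  rw [hval]
  simp [div_self hu.ne']
  ring

lemma integral_one_div_sq_mul_sqrt_sq_sub_sq_pos {s b : ℝ} (hs : 0 < s) (hsb : s < b) :
    0 < ∫ u in s..b, 1 / (u ^ 2 * √(u ^ 2 - s ^ 2)) := by
  rw [(intervalIntegrable_and_integral_one_div_sq_mul_sqrt_sq_sub_sq hs hsb.le).2]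
  have : 0 < b ^ 2 - s ^ 2 := by nlinarith
  have : 0 < b := hs.trans hsb
  positivity

lemma intervalIntegrable_div_sq_mul_sqrt_sq_sub_sq {a : ℝ → ℝ} {C s b : ℝ} (ha : Measurable a)
    (hC : ∀ u, |a u| ≤ C) (hs : 0 < s) (hsb : s ≤ b) :
    IntervalIntegrable (fun u => a u / (u ^ 2 * √(u ^ 2 - s ^ 2))) volume s b := by
  have hw := (intervalIntegrable_and_integral_one_div_sq_mul_sqrt_sq_sub_sq hs hsb).1
  rw [intervalIntegrable_iff_integrableOn_Ioc_of_le hsb] at hw ⊢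
  have := hw.bdd_mul ha.aestronglyMeasurable (ae_of_all _ hC)
  simp only [mul_one_div] at this
  exact this

/- Since also `x / 0 = 0`, the integrands below vanish off `{s < u}`, so the double integral can
be taken over the whole square `(0,b]²`. -/
lemma sqrt_sq_sub_sq_eq_zero {s u : ℝ} (hu : 0 ≤ u) (hus : u ≤ s) : √(u ^ 2 - s ^ 2) = 0 :=
  sqrt_eq_zero'.2 (by nlinarith)

lemma integrableOn_and_setIntegral_sq_mul_div_sqrt_sq_sub_sq (c : ℝ) {u b : ℝ} (hu : 0 < u)
    (hub : u ≤ b) :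
    IntegrableOn (fun s => s ^ 2 * (c / (u ^ 2 * √(u ^ 2 - s ^ 2)))) (Ioc 0 b) ∧
      ∫ s in Ioc 0 b, s ^ 2 * (c / (u ^ 2 * √(u ^ 2 - s ^ 2))) = π / 4 * c := by
  have hfun : (fun s => s ^ 2 * (c / (u ^ 2 * √(u ^ 2 - s ^ 2)))) =
      fun s => c / u ^ 2 * (s ^ 2 / √(u ^ 2 - s ^ 2)) := by
    funext s; ring
  have hvanish : ∀ s ∈ Ioc 0 b \ Ioc 0 u, c / u ^ 2 * (s ^ 2 / √(u ^ 2 - s ^ 2)) = 0 := by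
    rintro s ⟨hs, hsu⟩
    have : u ≤ s := by by_contra! h; exact hsu ⟨hs.1, h.le⟩
    rw [sqrt_sq_sub_sq_eq_zero hu.le this, div_zero, mul_zero]
  obtain ⟨hint, hval⟩ := intervalIntegrable_and_integral_sq_div_sqrt_sq_sub_sq hu
  rw [intervalIntegrable_iff_integrableOn_Ioc_of_le hu.le] at hint
  rw [intervalIntegral.integral_of_le hu.le] at hval
  rw [hfun]
  refine ⟨IntegrableOn.of_forall_sdiff_eq_zero (hint.const_mul _) measurableSet_Ioc hvanish, ?_⟩
  rw [setIntegral_eq_of_subset_of_forall_sdiff_eq_zero measurableSet_Ioc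
    (Ioc_subset_Ioc_right hub) hvanish, integral_const_mul, hval]
  field_simp

lemma setIntegral_sq_mul_div_sqrt_sq_sub_sq (h : ℝ → ℝ) {s b : ℝ} (hs : 0 ≤ s) (hsb : s ≤ b) :
    ∫ u in Ioc 0 b, s ^ 2 * (h u / (u ^ 2 * √(u ^ 2 - s ^ 2))) =
      s ^ 2 * ∫ u in s..b, h u / (u ^ 2 * √(u ^ 2 - s ^ 2)) := by
  have hvanish : ∀ u ∈ Ioc 0 b \ Ioc s b, h u / (u ^ 2 * √(u ^ 2 - s ^ 2)) = 0 := by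
    rintro u ⟨hu, hus⟩
    have : u ≤ s := by by_contra! h; exact hus ⟨h, hu.2⟩
    rw [sqrt_sq_sub_sq_eq_zero hu.1.le this, mul_zero, div_zero]
  rw [integral_const_mul, intervalIntegral.integral_of_le hsb,
    setIntegral_eq_of_subset_of_forall_sdiff_eq_zero measurableSet_Ioc
      (Ioc_subset_Ioc_left hs) hvanish]

section Fubini

variable {h : ℝ → ℝ} {b : ℝ}

lemma integrable_prod_sq_mul_div_sqrt_sq_sub_sq (hh : IntegrableOn h (Ioc 0 b)) :
    Integrable (fun p : ℝ × ℝ => p.1 ^ 2 * (h p.2 / (p.2 ^ 2 * √(p.2 ^ 2 - p.1 ^ 2))))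
      ((volume.restrict (Ioc 0 b)).prod (volume.restrict (Ioc 0 b))) := by
  have hmeas : AEStronglyMeasurable
      (fun p : ℝ × ℝ => p.1 ^ 2 * (h p.2 / (p.2 ^ 2 * √(p.2 ^ 2 - p.1 ^ 2))))
      ((volume.restrict (Ioc 0 b)).prod (volume.restrict (Ioc 0 b))) :=
    ((measurable_fst.pow_const 2).aemeasurable.mul
      (hh.aestronglyMeasurable.aemeasurable.comp_snd.div (by fun_prop))).aestronglyMeasurable
  rw [integrable_prod_iff' hmeas]
  constructor
  · filter_upwards [ae_restrict_mem measurableSet_Ioc] with u hu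
    exact (integrableOn_and_setIntegral_sq_mul_div_sqrt_sq_sub_sq (h u) hu.1 hu.2).1
  · refine (hh.abs.const_mul (π / 4)).congr ?_
    filter_upwards [ae_restrict_mem measurableSet_Ioc] with u hu
    have hnorm : ∀ s, ‖s ^ 2 * (h u / (u ^ 2 * √(u ^ 2 - s ^ 2)))‖ =
        s ^ 2 * (|h u| / (u ^ 2 * √(u ^ 2 - s ^ 2))) := fun s => by
      rw [Real.norm_eq_abs, abs_mul, abs_div, abs_of_nonneg (sq_nonneg s),
        abs_of_nonneg (by positivity : 0 ≤ u ^ 2 * √(u ^ 2 - s ^ 2))]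
    simp only [hnorm]
    exact (integrableOn_and_setIntegral_sq_mul_div_sqrt_sq_sub_sq |h u| hu.1 hu.2).2.symm

theorem intervalIntegrable_and_integral_sq_mul_integral_div_sqrt_sq_sub_sq (hb : 0 ≤ b)
    (hh : IntervalIntegrable h volume 0 b) :
    IntervalIntegrable (fun s => s ^ 2 * ∫ u in s..b, h u / (u ^ 2 * √(u ^ 2 - s ^ 2)))
        volume 0 b ∧
      ∫ s in (0 : ℝ)..b, s ^ 2 * ∫ u in s..b, h u / (u ^ 2 * √(u ^ 2 - s ^ 2)) =
        π / 4 * ∫ u in (0 : ℝ)..b, h u := by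
  rw [intervalIntegrable_iff_integrableOn_Ioc_of_le hb] at hh ⊢
  have hG := integrable_prod_sq_mul_div_sqrt_sq_sub_sq hh
  have hsection : (fun s => ∫ u in Ioc 0 b, s ^ 2 * (h u / (u ^ 2 * √(u ^ 2 - s ^ 2))))
      =ᵐ[volume.restrict (Ioc 0 b)]
        fun s => s ^ 2 * ∫ u in s..b, h u / (u ^ 2 * √(u ^ 2 - s ^ 2)) := by
    filter_upwards [ae_restrict_mem measurableSet_Ioc] with s hs
    exact setIntegral_sq_mul_div_sqrt_sq_sub_sq h hs.1.le hs.2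
  refine ⟨hG.integral_prod_left.congr hsection, ?_⟩
  rw [intervalIntegral.integral_of_le hb, intervalIntegral.integral_of_le hb,
    ← integral_congr_ae hsection, integral_integral_swap hG, ← integral_const_mul]
  refine integral_congr_ae ?_
  filter_upwards [ae_restrict_mem measurableSet_Ioc] with u hu
  exact (integrableOn_and_setIntegral_sq_mul_div_sqrt_sq_sub_sq (h u) hu.1 hu.2).2

theorem exists_integral_div_sq_mul_sqrt_sq_sub_sq_nonpos (hb : 0 < b)
    (hh : IntervalIntegrable h volume 0 b) (h0 : ∫ u in (0 : ℝ)..b, h u = 0) :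
    ∃ s ∈ Ioo 0 b, ∫ u in s..b, h u / (u ^ 2 * √(u ^ 2 - s ^ 2)) ≤ 0 := by
  by_contra! hpos
  obtain ⟨hint, heq⟩ := intervalIntegrable_and_integral_sq_mul_integral_div_sqrt_sq_sub_sq hb.le hh
  have := intervalIntegral.intervalIntegral_pos_of_pos_on hint
    (fun s hs => mul_pos (pow_pos hs.1 2) (hpos s hs)) hb
  rw [heq, h0, mul_zero] at this
  exact this.false

end Fubini

theorem exists_integral_div_sq_mul_sqrt_sq_sub_sq_le {a : ℝ → ℝ} {C b : ℝ} (ha : Measurable a)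
    (hC : ∀ u, |a u| ≤ C) (hb : 0 < b) (ha_mean : ∫ u in (0 : ℝ)..b, a u = b) :
    ∃ s ∈ Ioo 0 b, ∫ u in s..b, a u / (u ^ 2 * √(u ^ 2 - s ^ 2)) ≤
      ∫ u in s..b, 1 / (u ^ 2 * √(u ^ 2 - s ^ 2)) := by
  have ha_int : IntervalIntegrable a volume 0 b :=
    intervalIntegrable_const.mono_fun' ha.aestronglyMeasurable (ae_of_all _ hC)
  obtain ⟨s, hs, hle⟩ := exists_integral_div_sq_mul_sqrt_sq_sub_sq_nonpos (h := fun u => a u - 1)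
    hb (ha_int.sub intervalIntegrable_const)
    (by rw [intervalIntegral.integral_sub ha_int intervalIntegrable_const, ha_mean]; simp)
  refine ⟨s, hs, ?_⟩
  simp only [sub_div] at hle
  rw [intervalIntegral.integral_sub
    (intervalIntegrable_div_sq_mul_sqrt_sq_sub_sq ha hC hs.1 hs.2.le)
    (intervalIntegrable_and_integral_one_div_sq_mul_sqrt_sq_sub_sq hs.1 hs.2.le).1] at hle
  linarith

lemma Real.iInf_le_of_le_of_nonneg {ι : Sort*} {f : ι → ℝ} {a : ℝ} (i : ι) (hi : f i ≤ a)
    (ha : 0 ≤ a) : ⨅ i, f i ≤ a := by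
  by_cases hf : BddBelow (range f)
  · exact ciInf_le_of_le hf i hi
  · rwa [Real.iInf_of_not_bddBelow hf]

/-- with `F_s(x) = ∫_s^x du/(u²√(u²-s²))`, the supremum over
`a ∈ L^∞([0,1])` with `∫₀¹ a = 1` of
`inf_{s ∈ (0,1)} (1/F_s(1)) ∫_s^1 a(u)/(u²√(u²-s²)) du` equals `1`,
attained at `a ≡ 1`. -/
theorem stmt14 (F : ℝ → ℝ → ℝ)
    (hF : ∀ s x : ℝ, F s x = ∫ u in s..x, 1 / (u ^ 2 * Real.sqrt (u ^ 2 - s ^ 2))) :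
    (⨅ s : Set.Ioo (0 : ℝ) 1, (1 / F (s : ℝ) 1) *
        ∫ u in (s : ℝ)..1, (1 : ℝ) / (u ^ 2 * Real.sqrt (u ^ 2 - (s : ℝ) ^ 2))) = 1 ∧
    (∀ a : ℝ → ℝ, Measurable a → (∃ C : ℝ, ∀ u, |a u| ≤ C) →
      (∫ u in (0 : ℝ)..1, a u) = 1 →
      (⨅ s : Set.Ioo (0 : ℝ) 1, (1 / F (s : ℝ) 1) *
          ∫ u in (s : ℝ)..1, a u / (u ^ 2 * Real.sqrt (u ^ 2 - (s : ℝ) ^ 2))) ≤ 1) := by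
  have hF_pos : ∀ s : Ioo (0 : ℝ) 1, 0 < F s 1 := fun s => by
    rw [hF]; exact integral_one_div_sq_mul_sqrt_sq_sub_sq_pos s.2.1 s.2.2
  refine ⟨?_, fun a ha ⟨C, hC⟩ ha_mean => ?_⟩
  · have : Nonempty (Ioo (0 : ℝ) 1) := ⟨⟨1 / 2, by norm_num, by norm_num⟩⟩
    have hone : ∀ s : Ioo (0 : ℝ) 1, (1 / F s 1) *
        ∫ u in (s : ℝ)..1, (1 : ℝ) / (u ^ 2 * √(u ^ 2 - (s : ℝ) ^ 2)) = 1 := fun s => by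
      rw [← hF]; exact one_div_mul_cancel (hF_pos s).ne'
    simp only [hone, ciInf_const]
  obtain ⟨s, hs, hle⟩ := exists_integral_div_sq_mul_sqrt_sq_sub_sq_le ha hC one_pos ha_mean
  refine Real.iInf_le_of_le_of_nonneg ⟨s, hs⟩ ?_ zero_le_one
  rw [one_div_mul_eq_div, div_le_one (hF_pos ⟨s, hs⟩), hF]
  exact hle
end

section
/- Let Ω = (−απ/2, απ/2) × (−βπ/2, βπ/2) with α, β > 0. For a ∈ L^∞(∂Ω) set A_k(a) = ∫_{Σ₁∪Σ₃} a·sin²((k/β)(y + πβ/2)) dy (integral over the vertical sides) and B_n(a) = ∫_{Σ₂∪Σ₄} a·sin²((n/α)(x + πα/2)) dx (horizontal sides). Then inf over (n,k) ∈ ℕ*² of [ (n²/α²)·A_k(a) + (k²/β²)·B_n(a) ] / (n²/α² + k²/β²) equals min( inf_k A_k(a), inf_n B_n(a) ). -/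
/-!
Every quotient is a weighted average of `A k` and `B n` with positive weights `n²/α²`, `k²/β²`,
hence at least `min (A k) (B n)`. Conversely, `a` is bounded, hence so are all `A k` and `B n`;
fixing `k` and letting `n → ∞`, the weight of `B n` becomes negligible and the quotient tends to
`A k`, and symmetrically with the roles of `n` and `k` exchanged. No oscillation of the `sin²`
weights (Riemann–Lebesgue) is needed.
-/

open Real Filter Topology Set

lemma min_le_weightedAvg {x y u v : ℝ} (hu : 0 < u) (hv : 0 < v) :
    min x y ≤ (u * x + v * y) / (u + v) := by
  rw [le_div_iff₀ (by linarith)]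
  nlinarith [min_le_left x y, min_le_right x y]

lemma tendsto_weightedAvg_of_tendsto_atTop {ι : Type*} {l : Filter ι} {w y : ι → ℝ} {M : ℝ}
    (hw : Tendsto w l atTop) (hy : ∀ i, |y i| ≤ M) (x c : ℝ) :
    Tendsto (fun i => (w i * x + c * y i) / (w i + c)) l (𝓝 x) := by
  have hden : Tendsto (fun i => w i + c) l atTop := tendsto_atTop_add_const_right _ c hw
  have hbdd : ∀ i, |c * (y i - x)| ≤ |c| * (M + |x|) := fun i => by
    rw [abs_mul]
    gcongr
    exact (abs_sub _ _).trans (by linarith [hy i])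
  have hsmall : Tendsto (fun i => c * (y i - x) * (w i + c)⁻¹) l (𝓝 0) :=
    bdd_le_mul_tendsto_zero' _ (Eventually.of_forall hbdd) hden.inv_tendsto_atTop
  refine (by simpa using hsmall.const_add x : Tendsto _ l (𝓝 x)).congr' ?_
  filter_upwards [hden.eventually_gt_atTop 0] with i hi
  field_simp
  ring

theorem iInf_weightedAvg_eq_min {ι κ : Type*} {l : Filter ι} {l' : Filter κ} [l.NeBot]
    [l'.NeBot] {u : ι → ℝ} {v : κ → ℝ} (hu : ∀ i, 0 < u i) (hv : ∀ j, 0 < v j)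
    (hu_top : Tendsto u l atTop) (hv_top : Tendsto v l' atTop)
    {A : κ → ℝ} {B : ι → ℝ} {M : ℝ} (hA : ∀ j, |A j| ≤ M)
    (hB : ∀ i, |B i| ≤ M) :
    ⨅ p : ι × κ, (u p.1 * A p.2 + v p.2 * B p.1) / (u p.1 + v p.2)
      = min (⨅ j, A j) (⨅ i, B i) := by
  have := nonempty_of_neBot l
  have := nonempty_of_neBot l'
  have hlower : ∀ p : ι × κ,
      min (A p.2) (B p.1) ≤ (u p.1 * A p.2 + v p.2 * B p.1) / (u p.1 + v p.2) :=
    fun p => min_le_weightedAvg (hu p.1) (hv p.2)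
  have hA_bdd : BddBelow (range A) :=
    ⟨-M, by rintro _ ⟨j, rfl⟩; linarith [neg_abs_le (A j), hA j]⟩
  have hB_bdd : BddBelow (range B) :=
    ⟨-M, by rintro _ ⟨i, rfl⟩; linarith [neg_abs_le (B i), hB i]⟩
  have hQ_bdd : BddBelow (range fun p : ι × κ =>
      (u p.1 * A p.2 + v p.2 * B p.1) / (u p.1 + v p.2)) := by
    refine ⟨-M, ?_⟩
    rintro _ ⟨p, rfl⟩
    refine le_trans (le_min ?_ ?_) (hlower p)
    · linarith [neg_abs_le (A p.2), hA p.2]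
    · linarith [neg_abs_le (B p.1), hB p.1]
  refine le_antisymm (le_min (le_ciInf fun j => ?_) (le_ciInf fun i => ?_)) (le_ciInf fun p => ?_)
  · exact ge_of_tendsto (tendsto_weightedAvg_of_tendsto_atTop hu_top hB (A j) (v j))
      (Eventually.of_forall fun i => ciInf_le hQ_bdd (i, j))
  · refine ge_of_tendsto (tendsto_weightedAvg_of_tendsto_atTop hv_top hA (B i) (u i))
      (Eventually.of_forall fun j => (ciInf_le hQ_bdd (i, j)).trans_eq ?_)
    rw [add_comm (u i * _), add_comm (u i)]
  · exact (min_le_min (ciInf_le hA_bdd p.2) (ciInf_le hB_bdd p.1)).trans (hlower p)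

lemma abs_intervalIntegral_mul_sin_sq_le {f g : ℝ → ℝ} {C : ℝ} (hf : ∀ x, |f x| ≤ C)
    (a b : ℝ) :
    |∫ x in a..b, f x * sin (g x) ^ 2| ≤ C * |b - a| := by
  rw [← Real.norm_eq_abs]
  refine intervalIntegral.norm_integral_le_of_norm_le_const fun x _ => ?_
  rw [norm_mul, norm_pow, Real.norm_eq_abs, Real.norm_eq_abs]
  calc |f x| * |sin (g x)| ^ 2 ≤ |f x| * 1 := by
        gcongr
        rw [sq_abs]
        exact sin_sq_le_one _
    _ ≤ C := by linarith [hf x]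

lemma tendsto_pnat_sq_div_atTop {c : ℝ} (hc : c ≠ 0) :
    Tendsto (fun n : ℕ+ => (n : ℝ) ^ 2 / c ^ 2) atTop atTop :=
  ((tendsto_pow_atTop two_ne_zero).comp
    (tendsto_natCast_atTop_atTop.comp tendsto_PNat_val_atTop_atTop)).atTop_div_const
    (by positivity)

theorem stmt17_general (α β : ℝ) (hα : 0 < α) (hβ : 0 < β)
    (a : ℝ × ℝ → ℝ) (hbd : ∃ C : ℝ, ∀ p, |a p| ≤ C)
    (A B : ℕ → ℝ)
    (hA : ∀ k : ℕ, A k = ∫ y in (-(β * π / 2))..(β * π / 2),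
        (a (α * π / 2, y) + a (-(α * π / 2), y)) *
          Real.sin (((k : ℝ) / β) * (y + π * β / 2)) ^ 2)
    (hB : ∀ n : ℕ, B n = ∫ x in (-(α * π / 2))..(α * π / 2),
        (a (x, β * π / 2) + a (x, -(β * π / 2))) *
          Real.sin (((n : ℝ) / α) * (x + π * α / 2)) ^ 2) :
    (⨅ p : ℕ+ × ℕ+,
        (((p.1 : ℝ) ^ 2 / α ^ 2) * A (p.2 : ℕ) + ((p.2 : ℝ) ^ 2 / β ^ 2) * B (p.1 : ℕ)) /
          ((p.1 : ℝ) ^ 2 / α ^ 2 + (p.2 : ℝ) ^ 2 / β ^ 2))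
      = min (⨅ k : ℕ+, A (k : ℕ)) (⨅ n : ℕ+, B (n : ℕ)) := by
  obtain ⟨C, hC⟩ := hbd
  have hsum : ∀ p q, |a p + a q| ≤ 2 * C := fun p q =>
    (abs_add_le _ _).trans (by linarith [hC p, hC q])
  set M := 2 * C * |β * π / 2 - -(β * π / 2)| + 2 * C * |α * π / 2 - -(α * π / 2)|
  have hC_nonneg : 0 ≤ 2 * C := (abs_nonneg _).trans (hsum (0, 0) (0, 0))
  have hA_bdd : ∀ k : ℕ+, |A k| ≤ M := fun k => by
    rw [hA]
    exact (abs_intervalIntegral_mul_sin_sq_le (fun y => hsum _ _) _ _).trans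
      (le_add_of_nonneg_right (by positivity))
  have hB_bdd : ∀ n : ℕ+, |B n| ≤ M := fun n => by
    rw [hB]
    exact (abs_intervalIntegral_mul_sin_sq_le (fun x => hsum _ _) _ _).trans
      (le_add_of_nonneg_left (by positivity))
  exact iInf_weightedAvg_eq_min (fun n => by positivity) (fun k => by positivity)
    (tendsto_pnat_sq_div_atTop hα.ne') (tendsto_pnat_sq_div_atTop hβ.ne') hA_bdd hB_bdd

/-- for the rectangle `(-απ/2, απ/2) × (-βπ/2, βπ/2)` and a bounded
measurable density `a` on its boundary, with `A_k(a)` (resp. `B_n(a)`) the weighted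
integrals over the vertical (resp. horizontal) sides,
`inf_{(n,k)} [(n²/α²)A_k + (k²/β²)B_n]/(n²/α² + k²/β²) = min(inf_k A_k, inf_n B_n)`. -/
theorem stmt17 (α β : ℝ) (hα : 0 < α) (hβ : 0 < β)
    (a : ℝ × ℝ → ℝ) (ha : Measurable a) (hbd : ∃ C : ℝ, ∀ p, |a p| ≤ C)
    (A B : ℕ → ℝ)
    (hA : ∀ k : ℕ, A k = ∫ y in (-(β * π / 2))..(β * π / 2),
        (a (α * π / 2, y) + a (-(α * π / 2), y)) *
          Real.sin (((k : ℝ) / β) * (y + π * β / 2)) ^ 2)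
    (hB : ∀ n : ℕ, B n = ∫ x in (-(α * π / 2))..(α * π / 2),
        (a (x, β * π / 2) + a (x, -(β * π / 2))) *
          Real.sin (((n : ℝ) / α) * (x + π * α / 2)) ^ 2) :
    (⨅ p : ℕ+ × ℕ+,
        (((p.1 : ℝ) ^ 2 / α ^ 2) * A (p.2 : ℕ) + ((p.2 : ℝ) ^ 2 / β ^ 2) * B (p.1 : ℕ)) /
          ((p.1 : ℝ) ^ 2 / α ^ 2 + (p.2 : ℝ) ^ 2 / β ^ 2))
      = min (⨅ k : ℕ+, A (k : ℕ)) (⨅ n : ℕ+, B (n : ℕ)) :=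
  stmt17_general α β hα hβ a hbd A B hA hB
end
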